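/- Let Φ be a norm on ℝ^{n+1}. The boundary of B_Φ is a generalized graph in the vertical direction if and only if the boundary of B_{Φ^o} is a generalized graph in the vertical direction; that is, Φ(ξ̂, ξ_{n+1}) ≥ Φ(ξ̂, 0) holds for all (ξ̂, ξ_{n+1}) ∈ ℝ^{n+1} if and only if Φ^o(ξ̂*, ξ*_{n+1}) ≥ Φ^o(ξ̂*, 0) holds for all (ξ̂*, ξ*_{n+1}) ∈ ℝ^{n+1}. -/

import Mathlib

open MeasureTheory Set Filter

noncomputable section

/-- `ℝ^n` with the Euclidean norm. -/
abbrev Rn (n : ℕ) := EuclideanSpace ℝ (Fin n)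

/-- `ℝ^{n+1} = ℝ^n × ℝ`. -/
abbrev Rn1 (n : ℕ) := Rn n × ℝ

/-- Euclidean dot product on `ℝ^n`. -/
def dotn {n : ℕ} (x y : Rn n) : ℝ := ∑ i, x i * y i

/-- Euclidean dot product on `ℝ^{n+1} = ℝ^n × ℝ`. -/
def dotp {n : ℕ} (x y : Rn1 n) : ℝ := dotn x.1 y.1 + x.2 * y.2

/-- Euclidean norm on `ℝ^{n+1} = ℝ^n × ℝ`. -/
def enorm1 {n : ℕ} (x : Rn1 n) : ℝ := Real.sqrt (dotp x x)

/-- `Ψ` is a norm on `ℝ^n`: convex, absolutely one-homogeneous and bounded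
below by a positive multiple of the Euclidean norm. -/
def IsNormN {n : ℕ} (Ψ : Rn n → ℝ) : Prop :=
  ConvexOn ℝ univ Ψ ∧ (∀ (c : ℝ) (ξ : Rn n), Ψ (c • ξ) = |c| * Ψ ξ) ∧
    ∃ c > (0:ℝ), ∀ ξ, c * ‖ξ‖ ≤ Ψ ξ

/-- `Φ` is a norm on `ℝ^{n+1}`. -/
def IsNorm1 {n : ℕ} (Φ : Rn1 n → ℝ) : Prop :=
  ConvexOn ℝ univ Φ ∧ (∀ (c : ℝ) (ξ : Rn1 n), Φ (c • ξ) = |c| * Φ ξ) ∧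
    ∃ c > (0:ℝ), ∀ ξ, c * enorm1 ξ ≤ Φ ξ

/-- Dual norm on `ℝ^n`: `Ψ^o(ξ*) = sup {ξ*·ξ : Ψ(ξ) ≤ 1}`. -/
def dualN {n : ℕ} (Ψ : Rn n → ℝ) (xs : Rn n) : ℝ :=
  sSup ((fun ξ => dotn xs ξ) '' {ξ | Ψ ξ ≤ 1})

/-- Dual norm on `ℝ^{n+1}`. -/
def dual1 {n : ℕ} (Φ : Rn1 n → ℝ) (xs : Rn1 n) : ℝ :=
  sSup ((fun ξ => dotp xs ξ) '' {ξ | Φ ξ ≤ 1})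

/-- `Φ` is cylindrical over `φ`: `Φ(ξ̂,ξ_{n+1}) = max (φ(ξ̂), |ξ_{n+1}|)`. -/
def Cylindrical {n : ℕ} (Φ : Rn1 n → ℝ) (φ : Rn n → ℝ) : Prop :=
  ∀ ξ : Rn1 n, Φ ξ = max (φ ξ.1) |ξ.2|

/-- `A` is an open set compactly contained in `O`. -/
def CpCtd {E : Type*} [TopologicalSpace E] (A O : Set E) : Prop :=
  IsOpen A ∧ IsCompact (closure A) ∧ closure A ⊆ O

/-- Divergence of a vector field on `ℝ^n`. -/
def divN {n : ℕ} (η : Rn n → Rn n) (x : Rn n) : ℝ :=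
  ∑ i, fderiv ℝ η x (EuclideanSpace.single i (1:ℝ)) i

/-- Divergence of a vector field on `ℝ^{n+1} = ℝ^n × ℝ`. -/
def div1 {n : ℕ} (η : Rn1 n → Rn1 n) (z : Rn1 n) : ℝ :=
  (∑ i, (fderiv ℝ η z (EuclideanSpace.single i (1:ℝ), (0:ℝ))).1 i) +
    (fderiv ℝ η z ((0 : Rn n), (1:ℝ))).2

/-- Admissible test vector fields on `ℝ^n`: `C^1`, compactly supported in `A`,
with values in the unit ball of `Ψ`. -/
def TestN {n : ℕ} (A : Set (Rn n)) (Ψ : Rn n → ℝ) (η : Rn n → Rn n) : Prop :=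
  ContDiff ℝ 1 η ∧ HasCompactSupport η ∧ tsupport η ⊆ A ∧ ∀ x, Ψ (η x) ≤ 1

/-- Admissible test vector fields on `ℝ^{n+1}`. -/
def Test1 {n : ℕ} (A : Set (Rn1 n)) (Φ : Rn1 n → ℝ) (η : Rn1 n → Rn1 n) : Prop :=
  ContDiff ℝ 1 η ∧ HasCompactSupport η ∧ tsupport η ⊆ A ∧ ∀ z, Φ (η z) ≤ 1

/-- The set of numbers whose supremum is the anisotropic perimeter `P_Ψ(E,A)` in `ℝ^n`. -/
def perSetN {n : ℕ} (Ψ : Rn n → ℝ) (E A : Set (Rn n)) : Set ℝ :=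
  {r | ∃ η, TestN A Ψ η ∧ r = -∫ x in E, divN η x}

/-- Anisotropic perimeter `P_Ψ(E,A)` in `ℝ^n`. -/
def PerN {n : ℕ} (Ψ : Rn n → ℝ) (E A : Set (Rn n)) : ℝ := sSup (perSetN Ψ E A)

/-- `E` has locally finite perimeter in `O ⊆ ℝ^n`. -/
def BVlocSetN {n : ℕ} (O E : Set (Rn n)) : Prop :=
  ∀ A, CpCtd A O → BddAbove (perSetN (fun x => ‖x‖) E A)

/-- `E` is a minimizer of `P_Ψ` (by compact perturbations) in `O ⊆ ℝ^n`. -/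
def MinPerN {n : ℕ} (Ψ : Rn n → ℝ) (O E : Set (Rn n)) : Prop :=
  BVlocSetN O E ∧ ∀ A, CpCtd A O → ∀ F, BVlocSetN O F →
    IsCompact (closure (symmDiff E F)) → closure (symmDiff E F) ⊆ A →
      PerN Ψ E A ≤ PerN Ψ F A

/-- The set of numbers whose supremum is the anisotropic perimeter `P_Φ(E,A)` in `ℝ^{n+1}`. -/
def perSet1 {n : ℕ} (Φ : Rn1 n → ℝ) (E A : Set (Rn1 n)) : Set ℝ :=
  {r | ∃ η, Test1 A Φ η ∧ r = -∫ z in E, div1 η z}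

/-- Anisotropic perimeter `P_Φ(E,A)` in `ℝ^{n+1}`. -/
def Per1 {n : ℕ} (Φ : Rn1 n → ℝ) (E A : Set (Rn1 n)) : ℝ := sSup (perSet1 Φ E A)

/-- `E` has locally finite perimeter in `O ⊆ ℝ^{n+1}`. -/
def BVlocSet1 {n : ℕ} (O E : Set (Rn1 n)) : Prop :=
  ∀ A, CpCtd A O → BddAbove (perSet1 enorm1 E A)

/-- `E` is a minimizer of `P_Φ` (by compact perturbations) in `O ⊆ ℝ^{n+1}`. -/
def MinPer1 {n : ℕ} (Φ : Rn1 n → ℝ) (O E : Set (Rn1 n)) : Prop :=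
  BVlocSet1 O E ∧ ∀ A, CpCtd A O → ∀ F, BVlocSet1 O F →
    IsCompact (closure (symmDiff E F)) → closure (symmDiff E F) ⊆ A →
      Per1 Φ E A ≤ Per1 Φ F A

/-- The set of numbers whose supremum is the total variation `TV(u,A)`. -/
def varSet {n : ℕ} (A : Set (Rn n)) (u : Rn n → ℝ) : Set ℝ :=
  {r | ∃ η, TestN A (fun x => ‖x‖) η ∧ r = ∫ x in A, u x * divN η x}

/-- Total variation `TV(u,A)`. -/
def TV {n : ℕ} (u : Rn n → ℝ) (A : Set (Rn n)) : ℝ := sSup (varSet A u)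

/-- `u ∈ BV_loc(Ω̂)`. -/
def BVlocFun {n : ℕ} (Ω : Set (Rn n)) (u : Rn n → ℝ) : Prop :=
  (∀ A, CpCtd A Ω → IntegrableOn u A) ∧ ∀ A, CpCtd A Ω → BddAbove (varSet A u)

/-- The set of numbers whose supremum is `G_{Φ^o}(u,A)`. -/
def Gset {n : ℕ} (Φ : Rn1 n → ℝ) (A : Set (Rn n)) (u : Rn n → ℝ) : Set ℝ :=
  {r | ∃ η : Rn n → Rn1 n, ContDiff ℝ 1 η ∧ HasCompactSupport η ∧ tsupport η ⊆ A ∧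
    (∀ x, Φ (η x) ≤ 1) ∧ r = ∫ x in A, (u x * divN (fun y => (η y).1) x + (η x).2)}

/-- The functional `G_{Φ^o}(u,A)`. -/
def Gfun {n : ℕ} (Φ : Rn1 n → ℝ) (u : Rn n → ℝ) (A : Set (Rn n)) : ℝ := sSup (Gset Φ A u)

/-- `w` has compact support contained in `A`. -/
def CptSupp {n : ℕ} (A : Set (Rn n)) (w : Rn n → ℝ) : Prop :=
  IsCompact (tsupport w) ∧ tsupport w ⊆ A

/-- `u` is a minimizer of `G_{Φ^o}` by compact perturbations in `Ω̂`,
i.e. `u ∈ M_{Φ^o}(Ω̂)`. -/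
def MinG {n : ℕ} (Φ : Rn1 n → ℝ) (Ω : Set (Rn n)) (u : Rn n → ℝ) : Prop :=
  BVlocFun Ω u ∧ ∀ A, CpCtd A Ω → ∀ v, BVlocFun Ω v →
    CptSupp A (fun x => u x - v x) → Gfun Φ u A ≤ Gfun Φ v A

/-- `u` is a minimizer of the total variation by compact perturbations in `Ω̂`. -/
def MinTV {n : ℕ} (Ω : Set (Rn n)) (u : Rn n → ℝ) : Prop :=
  BVlocFun Ω u ∧ ∀ A, CpCtd A Ω → ∀ v, BVlocFun Ω v →
    CptSupp A (fun x => u x - v x) → TV u A ≤ TV v A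

/-- Subgraph of `u : Ω̂ → ℝ`. -/
def sg {n : ℕ} (Ω : Set (Rn n)) (u : Rn n → ℝ) : Set (Rn1 n) :=
  {p | p.1 ∈ Ω ∧ p.2 < u p.1}

/-- `S` is locally a Lipschitz graph at `p`. -/
def IsLocLipGraphAt {n : ℕ} (S : Set (Rn1 n)) (p : Rn1 n) : Prop :=
  ∃ U : Set (Rn1 n), IsOpen U ∧ p ∈ U ∧ ∃ e : Rn1 n, enorm1 e = 1 ∧
    ∃ g : Rn1 n → ℝ, (∃ L : NNReal, LipschitzOnWith L g {y | dotp y e = 0}) ∧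
      S ∩ U = {z | ∃ y, dotp y e = 0 ∧ z = y + g y • e} ∩ U

/-- `Φ` is a partially monotone norm on `ℝ^{n+1}`. -/
def PartMono {n : ℕ} (Φ : Rn1 n → ℝ) : Prop :=
  ∀ ξ η : Rn1 n, Φ (ξ.1, 0) ≤ Φ (η.1, 0) → Φ ((0 : Rn n), ξ.2) ≤ Φ ((0 : Rn n), η.2) →
    Φ ξ ≤ Φ η

end

/-!
The vertical projection `P (ξ̂, ξ_{n+1}) = (ξ̂, 0)` is symmetric for the dot product. By
homogeneity, `Φ ∘ P ≤ Φ` says that `P` maps `B_Φ` into itself; taking suprema over `B_Φ` this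
gives `Φ^o ∘ P ≤ Φ^o`. Conversely, `B_Φ` is closed and convex, so by Hahn–Banach it is the
intersection of the half-spaces `{ξ | ξ*·ξ ≤ Φ^o(ξ*)}`, and `Φ^o ∘ P ≤ Φ^o` says that `P`
maps each point of this intersection back into it.
-/

open scoped RealInnerProductSpace

section Dot

variable {n : ℕ}

lemma dotn_eq_inner (x y : Rn n) : dotn x y = ⟪x, y⟫ := by
  simp [dotn, PiLp.inner_apply, mul_comm]

lemma dotp_eq_inner_toLp (x y : Rn1 n) : dotp x y = ⟪WithLp.toLp 2 x, WithLp.toLp 2 y⟫ := by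
  simp [dotp, dotn_eq_inner, WithLp.prod_inner_apply, mul_comm]

lemma enorm1_eq_norm_toLp (x : Rn1 n) : enorm1 x = ‖WithLp.toLp 2 x‖ := by
  rw [enorm1, dotp_eq_inner_toLp, real_inner_self_eq_norm_mul_norm,
    Real.sqrt_mul_self (norm_nonneg _)]

lemma dotp_le_enorm1_mul (x y : Rn1 n) : dotp x y ≤ enorm1 x * enorm1 y := by
  rw [dotp_eq_inner_toLp, enorm1_eq_norm_toLp, enorm1_eq_norm_toLp]
  exact real_inner_le_norm _ _

lemma dotp_fst_zero_comm (x y : Rn1 n) : dotp (x.1, 0) y = dotp x (y.1, 0) := by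
  simp [dotp]

lemma exists_dotp_eq (f : Rn1 n →L[ℝ] ℝ) : ∃ x, ∀ y, dotp x y = f y := by
  refine ⟨((InnerProductSpace.toDual ℝ (Rn n)).symm (f.comp (.inl ℝ _ ℝ)), f (0, 1)),
    fun y => ?_⟩
  calc dotp _ y = f (y.1, 0) + f (y.2 • (0, 1)) := by
        rw [dotp, dotn_eq_inner, InnerProductSpace.toDual_symm_apply, map_smul, smul_eq_mul,
          mul_comm]
        rfl
    _ = f y := by rw [← map_add]; congr 1; ext <;> simp

end Dot

lemma le_of_mapsTo_unitBall {E : Type*} [AddCommGroup E] [Module ℝ E] {Φ : E → ℝ}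
    (hhom : ∀ (c : ℝ) ξ, Φ (c • ξ) = |c| * Φ ξ) (hnonneg : ∀ ξ, 0 ≤ Φ ξ) (P : E →ₗ[ℝ] E)
    (hP : MapsTo P {ξ | Φ ξ ≤ 1} {ξ | Φ ξ ≤ 1}) (ξ : E) : Φ (P ξ) ≤ Φ ξ := by
  refine le_of_forall_gt_imp_ge_of_dense fun t ht => ?_
  have ht0 : 0 < t := (hnonneg ξ).trans_lt ht
  have hball : Φ (t⁻¹ • ξ) ≤ 1 := by
    rw [hhom, abs_of_pos (inv_pos.2 ht0), inv_mul_le_one₀ ht0]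
    exact ht.le
  have hPball : Φ (P (t⁻¹ • ξ)) ≤ 1 := hP hball
  rwa [map_smul, hhom, abs_of_pos (inv_pos.2 ht0), inv_mul_le_one₀ ht0] at hPball

namespace IsNorm1

variable {n : ℕ} {Φ : Rn1 n → ℝ}

lemma map_zero (hΦ : IsNorm1 Φ) : Φ 0 = 0 := by
  simpa using hΦ.2.1 0 0

lemma nonneg (hΦ : IsNorm1 Φ) (ξ : Rn1 n) : 0 ≤ Φ ξ := by
  obtain ⟨c, hc, hlow⟩ := hΦ.2.2
  exact (mul_nonneg hc.le (Real.sqrt_nonneg _)).trans (hlow ξ)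

lemma isClosed_unitBall (hΦ : IsNorm1 Φ) : IsClosed {ξ : Rn1 n | Φ ξ ≤ 1} :=
  isClosed_le (continuousOn_univ.1 (hΦ.1.continuousOn isOpen_univ)) continuous_const

lemma convex_unitBall (hΦ : IsNorm1 Φ) : Convex ℝ {ξ : Rn1 n | Φ ξ ≤ 1} := by
  simpa using hΦ.1.convex_le 1

lemma bddAbove_dotp_image (hΦ : IsNorm1 Φ) (x : Rn1 n) :
    BddAbove ((dotp x ·) '' {ξ | Φ ξ ≤ 1}) := by
  obtain ⟨c, hc, hlow⟩ := hΦ.2.2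
  refine ⟨enorm1 x * c⁻¹, ?_⟩
  rintro _ ⟨ξ, hξ, rfl⟩
  have hξc : enorm1 ξ ≤ c⁻¹ := by
    rw [← one_div, le_div_iff₀' hc]
    exact (hlow ξ).trans hξ
  exact (dotp_le_enorm1_mul x ξ).trans (mul_le_mul_of_nonneg_left hξc (Real.sqrt_nonneg _))

lemma dual1_le_iff (hΦ : IsNorm1 Φ) (x : Rn1 n) (u : ℝ) :
    dual1 Φ x ≤ u ↔ ∀ ξ, Φ ξ ≤ 1 → dotp x ξ ≤ u := by
  rw [dual1, csSup_le_iff (hΦ.bddAbove_dotp_image x) ⟨_, 0, by simp [hΦ.map_zero], rfl⟩,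
    Set.forall_mem_image]
  rfl

lemma dotp_le_dual1 (hΦ : IsNorm1 Φ) (x : Rn1 n) {ξ : Rn1 n} (hξ : Φ ξ ≤ 1) :
    dotp x ξ ≤ dual1 Φ x :=
  le_csSup (hΦ.bddAbove_dotp_image x) ⟨ξ, hξ, rfl⟩

/-- The bipolar theorem for `B_Φ`, via Hahn–Banach separation. -/
lemma le_one_iff_forall_dotp_le_dual1 (hΦ : IsNorm1 Φ) (p : Rn1 n) :
    Φ p ≤ 1 ↔ ∀ x, dotp x p ≤ dual1 Φ x := by
  refine ⟨fun hp x => hΦ.dotp_le_dual1 x hp, fun h => ?_⟩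
  by_contra hp
  obtain ⟨f, u, hfB, hup⟩ :=
    geometric_hahn_banach_closed_point hΦ.convex_unitBall hΦ.isClosed_unitBall hp
  obtain ⟨x, hx⟩ := exists_dotp_eq f
  have hdual : dual1 Φ x ≤ u :=
    (hΦ.dual1_le_iff x u).2 fun ξ hξ => (hx ξ ▸ hfB ξ hξ).le
  linarith [h x, hx p]

end IsNorm1

theorem generalized_graph_iff_dual {n : ℕ} (Φ : Rn1 n → ℝ) (hΦ : IsNorm1 Φ) :
    (∀ ξ : Rn1 n, Φ (ξ.1, (0:ℝ)) ≤ Φ ξ) ↔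
      (∀ ξs : Rn1 n, dual1 Φ (ξs.1, (0:ℝ)) ≤ dual1 Φ ξs) := by
  constructor
  · intro hgraph x
    rw [hΦ.dual1_le_iff]
    intro ξ hξ
    rw [dotp_fst_zero_comm]
    exact hΦ.dotp_le_dual1 x ((hgraph ξ).trans hξ)
  · intro hdual
    refine le_of_mapsTo_unitBall hΦ.2.1 hΦ.nonneg (.inl ℝ (Rn n) ℝ ∘ₗ .fst ℝ (Rn n) ℝ) ?_
    intro ξ (hξ : Φ ξ ≤ 1)
    refine (hΦ.le_one_iff_forall_dotp_le_dual1 (ξ.1, 0)).2 fun x => ?_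
    rw [← dotp_fst_zero_comm]
    exact (hΦ.dotp_le_dual1 _ hξ).trans (hdual x)
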